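/- For every subset A ⊆ {1,…,g}, the number of G-orbits of even classes [T] ∈ Θ with A(T) = A equals 2^{g−1−|A|} if |A| < g, and equals 1 if A = {1,…,g}. (These orbit counts are the multiplicities n_A^+ with which the field E_A occurs in the étale algebra S_C^+ of even theta characteristics of the test curve.) -/
import Mathlib


/-- `Ω = {1,…,2g+2}`. -/
def Omega (g : ℕ) : Finset ℕ := Finset.Icc 1 (2 * g + 2)

/-- Admissible subsets of `Ω`: subsets `T ⊆ Ω` with `|T| ≡ g+1 (mod 2)`. -/
def Adm (g : ℕ) := {T : Finset ℕ // T ⊆ Omega g ∧ T.card % 2 = (g + 1) % 2}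

/-- The permutation of `ℕ` attached to `v ∈ (ℤ/2ℤ)^g`: for each `j = 1,…,g` (indexed by
`Fin g` via `j−1`) with `v` nonzero at `j`, it swaps `2j−1` and `2j`, and it fixes
everything else. -/
def tau (g : ℕ) (v : Fin g → ZMod 2) (k : ℕ) : ℕ :=
  if h : 1 ≤ k ∧ k ≤ 2 * g then
    if v ⟨(k - 1) / 2, by omega⟩ = 1 then (if k % 2 = 1 then k + 1 else k - 1) else k
  else k

/-- The action of `v ∈ (ℤ/2ℤ)^g` on subsets of `Ω`. -/
def act (g : ℕ) (v : Fin g → ZMod 2) (T : Finset ℕ) : Finset ℕ :=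
  T.image (tau g v)

/-- `A(T) ⊆ {1,…,g}` (indexed by `Fin g`, with `j : Fin g` standing for `j+1`):
the set of `j` such that exactly one of `2j−1`, `2j` (i.e. of `2·j.val+1`, `2·j.val+2`)
belongs to `T`. -/
def ATset (g : ℕ) (T : Finset ℕ) : Finset (Fin g) :=
  Finset.univ.filter fun j =>
    (2 * (j : ℕ) + 1 ∈ T ∧ 2 * (j : ℕ) + 2 ∉ T) ∨ (2 * (j : ℕ) + 1 ∉ T ∧ 2 * (j : ℕ) + 2 ∈ T)

/-- A representative `T` is even if `|T| ≡ g+1 (mod 4)`; the class `[T] ∈ Θ` is even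
precisely when any (every) representative is. -/
def IsEvenRep (g : ℕ) (T : Adm g) : Prop := T.1.card % 4 = (g + 1) % 4

/-- Two representatives (satisfying a property `P`) determine classes in the same
`G`-orbit of `Θ` iff they are related by the composite of the `G`-action and the
equivalence `T ∼ Ω∖T`; the set of `G`-orbits of classes of representatives satisfying
`P` is the quotient by (the equivalence generated by) this relation. -/
def orbRel (g : ℕ) (P : Adm g → Prop) (S S' : {T : Adm g // P T}) : Prop :=
  ∃ v : Fin g → ZMod 2, S'.1.1 = act g v S.1.1 ∨ S'.1.1 = Omega g \ act g v S.1.1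

/-- The number of `G`-orbits of classes `[T] ∈ Θ` whose representatives satisfy `P`. -/
noncomputable def numOrbits (g : ℕ) (P : Adm g → Prop) : ℕ :=
  Nat.card (Quot (orbRel g P))

open Finset

section Helpers

variable {g : ℕ} {v : Fin g → ZMod 2} {T : Finset ℕ}

lemma tau_out (k : ℕ) (h : ¬ (1 ≤ k ∧ k ≤ 2 * g)) : tau g v k = k := by
  rw [tau, dif_neg h]

lemma tau_high (k : ℕ) (h : 2 * g + 1 ≤ k) : tau g v k = k :=
  tau_out k (by omega)

lemma tau_odd (j : Fin g) :
    tau g v (2 * (j : ℕ) + 1) = if v j = 1 then 2 * (j : ℕ) + 2 else 2 * (j : ℕ) + 1 := by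
  have hj := j.isLt
  have h : 1 ≤ 2 * (j : ℕ) + 1 ∧ 2 * (j : ℕ) + 1 ≤ 2 * g := ⟨by omega, by omega⟩
  rw [tau, dif_pos h]
  have hidx : (⟨(2 * (j : ℕ) + 1 - 1) / 2, by omega⟩ : Fin g) = j := by
    apply Fin.ext; show (2 * (j : ℕ) + 1 - 1) / 2 = (j : ℕ); omega
  rw [hidx]
  have hm : (2 * (j : ℕ) + 1) % 2 = 1 := by omega
  simp [hm]

lemma tau_even (j : Fin g) :
    tau g v (2 * (j : ℕ) + 2) = if v j = 1 then 2 * (j : ℕ) + 1 else 2 * (j : ℕ) + 2 := by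
  have hj := j.isLt
  have h : 1 ≤ 2 * (j : ℕ) + 2 ∧ 2 * (j : ℕ) + 2 ≤ 2 * g := ⟨by omega, by omega⟩
  rw [tau, dif_pos h]
  have hidx : (⟨(2 * (j : ℕ) + 2 - 1) / 2, by omega⟩ : Fin g) = j := by
    apply Fin.ext; show (2 * (j : ℕ) + 2 - 1) / 2 = (j : ℕ); omega
  rw [hidx]
  have hm : ¬ ((2 * (j : ℕ) + 2) % 2 = 1) := by omega
  simp [hm]

lemma exists_pair_index {k : ℕ} (hk : 1 ≤ k ∧ k ≤ 2 * g) :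
    ∃ j : Fin g, k = 2 * (j : ℕ) + 1 ∨ k = 2 * (j : ℕ) + 2 := by
  refine ⟨⟨(k - 1) / 2, by omega⟩, ?_⟩
  show k = 2 * ((k - 1) / 2) + 1 ∨ k = 2 * ((k - 1) / 2) + 2
  omega

lemma tau_invol : Function.Involutive (tau g v) := by
  intro k
  by_cases hk : 1 ≤ k ∧ k ≤ 2 * g
  · obtain ⟨j, hj⟩ := exists_pair_index hk
    rcases hj with h | h <;> rw [h] <;> by_cases hv : v j = 1 <;>
      simp [tau_odd, tau_even, hv]
  · rw [tau_out k hk, tau_out k hk]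

lemma mem_act {a : ℕ} : a ∈ act g v T ↔ tau g v a ∈ T := by
  constructor
  · rintro h
    obtain ⟨b, hb, he⟩ := Finset.mem_image.1 h
    rwa [← he, tau_invol]
  · intro h
    exact Finset.mem_image.2 ⟨tau g v a, h, tau_invol a⟩

lemma tau_mem_Omega {k : ℕ} (h : k ∈ Omega g) : tau g v k ∈ Omega g := by
  rw [Omega, Finset.mem_Icc] at *
  by_cases hk : 1 ≤ k ∧ k ≤ 2 * g
  · obtain ⟨j, hj⟩ := exists_pair_index hk
    have hjl := j.isLt
    rcases hj with hh | hh <;> rw [hh] <;> by_cases hv : v j = 1 <;>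
      simp only [tau_odd, tau_even, hv, if_pos, if_true, if_neg, if_false] <;> omega
  · rw [tau_out k hk]; omega

lemma act_subset_Omega (hT : T ⊆ Omega g) : act g v T ⊆ Omega g := by
  intro a ha
  rw [mem_act] at ha
  have := tau_mem_Omega (v := v) (hT ha)
  rwa [tau_invol] at this

lemma card_act : (act g v T).card = T.card :=
  Finset.card_image_of_injective _ tau_invol.injective

lemma ATset_act : ATset g (act g v T) = ATset g T := by
  ext j
  simp only [ATset, Finset.mem_filter, Finset.mem_univ, true_and, mem_act, tau_odd, tau_even]
  by_cases hv : v j = 1 <;> simp [hv] <;> tauto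

end Helpers

section Main

open scoped Classical

variable {g : ℕ} {A : Finset (Fin g)} {v : Fin g → ZMod 2} {T : Finset ℕ}

/-- pairs outside `A` whose elements are fully in `T`. -/
noncomputable def Bset (g : ℕ) (A : Finset (Fin g)) (T : Finset ℕ) : Finset (Fin g) :=
  Aᶜ.filter fun j => 2 * (j : ℕ) + 1 ∈ T

noncomputable def Phi (g : ℕ) (A : Finset (Fin g)) (T : Finset ℕ) : Finset (Fin g) :=
  if 2 * g + 1 ∈ T then Bset g A T else Aᶜ \ Bset g A T

lemma Bset_subset : Bset g A T ⊆ Aᶜ := Finset.filter_subset _ _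

lemma mem_Bset {j : Fin g} : j ∈ Bset g A T ↔ j ∉ A ∧ 2 * (j : ℕ) + 1 ∈ T := by
  simp [Bset]

lemma mem_ATset_iff {j : Fin g} :
    j ∈ ATset g T ↔ ((2 * (j : ℕ) + 1 ∈ T ∧ 2 * (j : ℕ) + 2 ∉ T) ∨
      (2 * (j : ℕ) + 1 ∉ T ∧ 2 * (j : ℕ) + 2 ∈ T)) := by
  simp [ATset]

lemma pair_mem_Omega (j : Fin g) :
    2 * (j : ℕ) + 1 ∈ Omega g ∧ 2 * (j : ℕ) + 2 ∈ Omega g := by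
  have := j.isLt
  constructor <;> (rw [Omega, Finset.mem_Icc]; omega)

lemma high_mem_Omega : 2 * g + 1 ∈ Omega g ∧ 2 * g + 2 ∈ Omega g := by
  constructor <;> (rw [Omega, Finset.mem_Icc]; omega)

lemma card_Omega : (Omega g).card = 2 * g + 2 := by
  rw [Omega, Nat.card_Icc]; omega

-- complement lemmas
lemma compl_subset_Omega : Omega g \ T ⊆ Omega g := Finset.sdiff_subset

lemma card_compl (hT : T ⊆ Omega g) : (Omega g \ T).card = 2 * g + 2 - T.card := by
  rw [Finset.card_sdiff_of_subset hT, card_Omega]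

lemma mem_compl_iff {k : ℕ} (hk : k ∈ Omega g) : k ∈ Omega g \ T ↔ k ∉ T := by
  simp [Finset.mem_sdiff, hk]

lemma compl_compl_Omega (hT : T ⊆ Omega g) : Omega g \ (Omega g \ T) = T :=
  Finset.sdiff_sdiff_eq_self hT

lemma ATset_compl : ATset g (Omega g \ T) = ATset g T := by
  ext j
  have h1 := (pair_mem_Omega j).1
  have h2 := (pair_mem_Omega j).2
  rw [mem_ATset_iff, mem_ATset_iff, mem_compl_iff h1, mem_compl_iff h2]
  tauto

lemma Bset_compl : Bset g A (Omega g \ T) = Aᶜ \ Bset g A T := by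
  ext j
  have h1 := (pair_mem_Omega j).1
  rw [mem_Bset, mem_compl_iff h1, Finset.mem_sdiff, mem_Bset, Finset.mem_compl]
  tauto

-- act preserves Bset and high membership
lemma Bset_act (hAT : ATset g T = A) : Bset g A (act g v T) = Bset g A T := by
  ext j
  rw [mem_Bset, mem_Bset, mem_act, tau_odd]
  by_cases hA : j ∈ A
  · simp [hA]
  · have hj : j ∉ ATset g T := by rw [hAT]; exact hA
    rw [mem_ATset_iff] at hj
    push_neg at hj
    by_cases hv : v j = 1 <;> simp [hv, hA] <;> tauto

lemma mem_act_high1 : 2 * g + 1 ∈ act g v T ↔ 2 * g + 1 ∈ T := by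
  rw [mem_act, tau_high _ (by omega)]

lemma mem_act_high2 : 2 * g + 2 ∈ act g v T ↔ 2 * g + 2 ∈ T := by
  rw [mem_act, tau_high _ (by omega)]

end Main

section Card

open scoped Classical

variable {g : ℕ} {A : Finset (Fin g)} {T : Finset ℕ}

lemma sum_range_pair (n : ℕ) (h : ℕ → ℕ) :
    ∑ i ∈ Finset.range (2 * n), h i = ∑ j ∈ Finset.range n, (h (2 * j) + h (2 * j + 1)) := by
  induction n with
  | zero => simp
  | succ n ih =>
    have : 2 * (n + 1) = (2 * n + 1) + 1 := by ring
    rw [this, Finset.sum_range_succ, Finset.sum_range_succ, ih, Finset.sum_range_succ]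
    ring

lemma card_eq_decomp (hT : T ⊆ Omega g) (hAT : ATset g T = A) :
    T.card = A.card + 2 * (Bset g A T).card +
      ((if 2 * g + 1 ∈ T then 1 else 0) + (if 2 * g + 2 ∈ T then 1 else 0)) := by
  have h1 : T = (Omega g).filter (· ∈ T) := by
    ext k
    simp only [Finset.mem_filter]
    exact ⟨fun h => ⟨hT h, h⟩, fun h => h.2⟩
  have h2 : T.card = ∑ k ∈ Omega g, (if k ∈ T then 1 else 0) := by
    conv_lhs => rw [h1]
    rw [Finset.card_filter]
  rw [h2]
  have h3 : Omega g = Finset.Ico 1 (2 * g + 2 + 1) := by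
    rw [Omega, Finset.Ico_add_one_right_eq_Icc]
  rw [h3, Finset.sum_Ico_eq_sum_range]
  have h4 : 2 * g + 2 + 1 - 1 = 2 * (g + 1) := by omega
  rw [h4, sum_range_pair, Finset.sum_range_succ]
  have e1 : 1 + 2 * g = 2 * g + 1 := by ring
  have e2 : 1 + (2 * g + 1) = 2 * g + 2 := by ring
  rw [e1, e2]
  congr 1
  have h6 : ∀ j : Fin g,
      ((if 1 + 2 * (j : ℕ) ∈ T then 1 else 0) + (if 1 + (2 * (j : ℕ) + 1) ∈ T then 1 else 0) : ℕ)
      = (if j ∈ A then 1 else 0) + 2 * (if j ∈ Bset g A T then 1 else 0) := by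
    intro j
    have e1 : 1 + 2 * (j : ℕ) = 2 * (j : ℕ) + 1 := by ring
    have e2 : 1 + (2 * (j : ℕ) + 1) = 2 * (j : ℕ) + 2 := by ring
    rw [e1, e2]
    have hmem : j ∈ A ↔ ((2 * (j : ℕ) + 1 ∈ T ∧ 2 * (j : ℕ) + 2 ∉ T) ∨
        (2 * (j : ℕ) + 1 ∉ T ∧ 2 * (j : ℕ) + 2 ∈ T)) := by
      rw [← hAT, mem_ATset_iff]
    by_cases hA : j ∈ A
    · have hB : j ∉ Bset g A T := fun h => (Finset.mem_compl.1 (Bset_subset h)) hA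
      rcases hmem.1 hA with ⟨hp, hq⟩ | ⟨hp, hq⟩ <;> simp [hp, hq, hA, hB]
    · have hno := hmem.not.1 hA
      push_neg at hno
      by_cases hp : 2 * (j : ℕ) + 1 ∈ T
      · have hq : 2 * (j : ℕ) + 2 ∈ T := by tauto
        have hB : j ∈ Bset g A T := mem_Bset.2 ⟨hA, hp⟩
        simp [hp, hq, hA, hB]
      · have hq : 2 * (j : ℕ) + 2 ∉ T := by tauto
        have hB : j ∉ Bset g A T := fun h => hp (mem_Bset.1 h).2
        simp [hp, hq, hA, hB]
  calc ∑ j ∈ Finset.range g,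
        ((if 1 + 2 * j ∈ T then 1 else 0) + (if 1 + (2 * j + 1) ∈ T then 1 else 0) : ℕ)
      = ∑ j : Fin g, ((if j ∈ A then 1 else 0) + 2 * (if j ∈ Bset g A T then 1 else 0) : ℕ) := by
        rw [← Fin.sum_univ_eq_sum_range]
        exact Finset.sum_congr rfl fun j _ => h6 j
    _ = A.card + 2 * (Bset g A T).card := by
        rw [Finset.sum_add_distrib, ← Finset.mul_sum, ← Finset.card_filter, ← Finset.card_filter,
          Finset.filter_univ_mem, Finset.filter_univ_mem]

end Card

section Phi

open scoped Classical

variable {g : ℕ} {A : Finset (Fin g)} {v : Fin g → ZMod 2} {T : Finset ℕ}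

lemma card_compl_A : (Aᶜ : Finset (Fin g)).card = g - A.card := by
  rw [Finset.card_compl, Fintype.card_fin]

lemma card_A_le : A.card ≤ g := by
  simpa using Finset.card_le_univ A

lemma card_Bset_le : (Bset g A T).card ≤ g - A.card := by
  rw [← card_compl_A]
  exact Finset.card_le_card Bset_subset

lemma Phi_subset : Phi g A T ⊆ Aᶜ := by
  rw [Phi]
  split_ifs
  · exact Bset_subset
  · exact Finset.sdiff_subset

lemma Phi_card (hT : T ⊆ Omega g) (hAT : ATset g T = A)
    (hEv : T.card % 4 = (g + 1) % 4) :
    (Phi g A T).card % 2 = ((g - A.card) / 2) % 2 := by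
  have hd := card_eq_decomp hT hAT
  have ha := card_A_le (A := A)
  have hb := card_Bset_le (A := A) (T := T)
  rw [Phi]
  by_cases h1 : 2 * g + 1 ∈ T <;> by_cases h2 : 2 * g + 2 ∈ T <;>
    simp only [h1, h2, if_true, if_false] at hd ⊢ <;>
    [skip; skip;
      rw [Finset.card_sdiff_of_subset Bset_subset, card_compl_A];
      rw [Finset.card_sdiff_of_subset Bset_subset, card_compl_A]] <;>
    omega

lemma Phi_mem_target (hT : T ⊆ Omega g) (hAT : ATset g T = A)
    (hEv : T.card % 4 = (g + 1) % 4) :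
    Phi g A T ∈ Aᶜ.powerset.filter fun B => B.card % 2 = ((g - A.card) / 2) % 2 := by
  rw [Finset.mem_filter, Finset.mem_powerset]
  exact ⟨Phi_subset, Phi_card hT hAT hEv⟩

lemma Phi_act (hAT : ATset g T = A) : Phi g A (act g v T) = Phi g A T := by
  rw [Phi, Phi, Bset_act hAT]
  by_cases h : 2 * g + 1 ∈ T <;> simp [mem_act_high1, h]

lemma Phi_compl (hT : T ⊆ Omega g) : Phi g A (Omega g \ T) = Phi g A T := by
  have hhi : 2 * g + 1 ∈ Omega g := high_mem_Omega.1
  have hm : (2 * g + 1 ∈ Omega g \ T) ↔ 2 * g + 1 ∉ T := mem_compl_iff hhi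
  rw [Phi, Phi, Bset_compl]
  by_cases h : 2 * g + 1 ∈ T
  · rw [if_neg (fun hc => (hm.1 hc) h), if_pos h, Finset.sdiff_sdiff_eq_self Bset_subset]
  · rw [if_pos (hm.2 h), if_neg h]

end Phi

section Logic

lemma logicA {p q p' q' : Prop} (h1 : (p ∧ ¬q) ∨ (¬p ∧ q)) (h2 : (p' ∧ ¬q') ∨ (¬p' ∧ q'))
    (hs : p ↔ p') : q ↔ q' := by tauto

lemma logicB {p q p' q' : Prop} (h1 : ¬((p ∧ ¬q) ∨ (¬p ∧ q))) (h2 : ¬((p' ∧ ¬q') ∨ (¬p' ∧ q')))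
    (hs : p ↔ p') : q ↔ q' := by tauto

lemma logicC {a p p' : Prop} (hBj : (¬a ∧ p) ↔ (¬a ∧ p')) (hs : ¬(p ↔ p')) : a := by tauto

lemma logicD {p q p' q' : Prop} (h1 : (p ∧ ¬q) ∨ (¬p ∧ q)) (h2 : (p' ∧ ¬q') ∨ (¬p' ∧ q'))
    (hs : ¬(p ↔ p')) : p' ↔ q := by tauto

lemma logicE {p q p' q' : Prop} (h1 : (p ∧ ¬q) ∨ (¬p ∧ q)) (h2 : (p' ∧ ¬q') ∨ (¬p' ∧ q'))
    (hs : ¬(p ↔ p')) : q' ↔ p := by tauto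

end Logic

section Key

open scoped Classical

variable {g : ℕ} {A : Finset (Fin g)}

lemma act_eq_of_spec (T T' : Finset ℕ) (hT : T ⊆ Omega g) (hT' : T' ⊆ Omega g)
    (hAT : ATset g T = A) (hAT' : ATset g T' = A)
    (hB : Bset g A T = Bset g A T')
    (hc1 : (2 * g + 1 ∈ T ↔ 2 * g + 1 ∈ T'))
    (hc2 : (2 * g + 2 ∈ T ↔ 2 * g + 2 ∈ T'))
    (v : Fin g → ZMod 2)
    (hv : ∀ j : Fin g, (v j = 1 ↔ ¬ (2 * (j : ℕ) + 1 ∈ T ↔ 2 * (j : ℕ) + 1 ∈ T'))) :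
    T' = act g v T := by
  ext k
  rw [mem_act]
  by_cases hk : 1 ≤ k ∧ k ≤ 2 * g
  · obtain ⟨j, hj⟩ := exists_pair_index hk
    have h1 : j ∈ A ↔ ((2 * (j : ℕ) + 1 ∈ T ∧ 2 * (j : ℕ) + 2 ∉ T) ∨
        (2 * (j : ℕ) + 1 ∉ T ∧ 2 * (j : ℕ) + 2 ∈ T)) := by
      rw [← hAT, mem_ATset_iff]
    have h2 : j ∈ A ↔ ((2 * (j : ℕ) + 1 ∈ T' ∧ 2 * (j : ℕ) + 2 ∉ T') ∨
        (2 * (j : ℕ) + 1 ∉ T' ∧ 2 * (j : ℕ) + 2 ∈ T')) := by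
      rw [← hAT', mem_ATset_iff]
    have hBj : (j ∉ A ∧ 2 * (j : ℕ) + 1 ∈ T) ↔ (j ∉ A ∧ 2 * (j : ℕ) + 1 ∈ T') := by
      rw [← mem_Bset, ← mem_Bset, hB]
    by_cases hsame : (2 * (j : ℕ) + 1 ∈ T ↔ 2 * (j : ℕ) + 1 ∈ T')
    · have hv0 : ¬ (v j = 1) := fun h => (hv j).1 h hsame
      have hpair : (2 * (j : ℕ) + 2 ∈ T ↔ 2 * (j : ℕ) + 2 ∈ T') := by
        by_cases hA : j ∈ A
        · exact logicA (h1.1 hA) (h2.1 hA) hsame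
        · exact logicB (fun hh => hA (h1.2 hh)) (fun hh => hA (h2.2 hh)) hsame
      rcases hj with h | h <;> rw [h]
      · rw [tau_odd, if_neg hv0]; exact hsame.symm
      · rw [tau_even, if_neg hv0]; exact hpair.symm
    · have hv1 : v j = 1 := (hv j).2 hsame
      have hA : j ∈ A := logicC hBj hsame
      have ha1 := h1.1 hA
      have ha2 := h2.1 hA
      rcases hj with h | h <;> rw [h]
      · rw [tau_odd, if_pos hv1]; exact logicD ha1 ha2 hsame
      · rw [tau_even, if_pos hv1]; exact logicE ha1 ha2 hsame
  · rw [tau_out k hk]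
    by_cases hk1 : k = 2 * g + 1
    · subst hk1; exact hc1.symm
    · by_cases hk2 : k = 2 * g + 2
      · subst hk2; exact hc2.symm
      · constructor
        · intro h
          have := hT' h
          rw [Omega, Finset.mem_Icc] at this
          omega
        · intro h
          have := hT h
          rw [Omega, Finset.mem_Icc] at this
          omega

lemma exists_act (T T' : Finset ℕ) (hT : T ⊆ Omega g) (hT' : T' ⊆ Omega g)
    (hAT : ATset g T = A) (hAT' : ATset g T' = A)
    (hp : T.card % 2 = T'.card % 2)
    (hB : Bset g A T = Bset g A T') (hc1 : (2 * g + 1 ∈ T ↔ 2 * g + 1 ∈ T')) :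
    ∃ v : Fin g → ZMod 2, T' = act g v T := by
  have hc2 : (2 * g + 2 ∈ T ↔ 2 * g + 2 ∈ T') := by
    have hd := card_eq_decomp hT hAT
    have hd' := card_eq_decomp hT' hAT'
    rw [hB] at hd
    have e1 : (if 2 * g + 1 ∈ T then 1 else 0 : ℕ) = (if 2 * g + 1 ∈ T' then 1 else 0) := by
      by_cases h : 2 * g + 1 ∈ T
      · rw [if_pos h, if_pos (hc1.1 h)]
      · rw [if_neg h, if_neg (fun hh => h (hc1.2 hh))]
    rw [← e1] at hd'
    by_cases h2 : 2 * g + 2 ∈ T <;> by_cases h2' : 2 * g + 2 ∈ T'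
    · exact iff_of_true h2 h2'
    · exfalso; rw [if_pos h2] at hd; rw [if_neg h2'] at hd'; omega
    · exfalso; rw [if_neg h2] at hd; rw [if_pos h2'] at hd'; omega
    · exact iff_of_false h2 h2'
  refine ⟨fun j => if (2 * (j : ℕ) + 1 ∈ T ↔ 2 * (j : ℕ) + 1 ∈ T') then 0 else 1,
    act_eq_of_spec T T' hT hT' hAT hAT' hB hc1 hc2 _ fun j => ?_⟩
  by_cases h : (2 * (j : ℕ) + 1 ∈ T ↔ 2 * (j : ℕ) + 1 ∈ T')
  · rw [if_pos h]
    exact iff_of_false (by decide) (by simpa using h)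
  · rw [if_neg h]
    exact iff_of_true rfl h

end Key

section MkT

open scoped Classical

variable {g : ℕ} {A B : Finset (Fin g)}

noncomputable def mkT (g : ℕ) (A B : Finset (Fin g)) : Finset ℕ :=
  (Omega g).filter fun k =>
    if k = 2 * g + 1 then True
    else if k = 2 * g + 2 then (g - A.card) % 2 = 1
    else ∃ j : Fin g, (k = 2 * (j : ℕ) + 1 ∧ (j ∈ A ∨ j ∈ B)) ∨
      (k = 2 * (j : ℕ) + 2 ∧ j ∈ B ∧ j ∉ A)

lemma mkT_subset : mkT g A B ⊆ Omega g := Finset.filter_subset _ _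

lemma mem_mkT_high1 : 2 * g + 1 ∈ mkT g A B := by
  rw [mkT, Finset.mem_filter, if_pos rfl]
  exact ⟨high_mem_Omega.1, trivial⟩

lemma mem_mkT_high2 : 2 * g + 2 ∈ mkT g A B ↔ (g - A.card) % 2 = 1 := by
  rw [mkT, Finset.mem_filter, if_neg (by omega), if_pos rfl]
  simp [high_mem_Omega.2]

lemma mem_mkT_odd (j : Fin g) : 2 * (j : ℕ) + 1 ∈ mkT g A B ↔ (j ∈ A ∨ j ∈ B) := by
  have hj := j.isLt
  rw [mkT, Finset.mem_filter, if_neg (by omega), if_neg (by omega)]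
  constructor
  · rintro ⟨-, j', ⟨he, h⟩ | ⟨he, h⟩⟩
    · have : j' = j := by apply Fin.ext; omega
      rwa [← this]
    · omega
  · intro h
    exact ⟨(pair_mem_Omega j).1, j, Or.inl ⟨rfl, h⟩⟩

lemma mem_mkT_even (j : Fin g) : 2 * (j : ℕ) + 2 ∈ mkT g A B ↔ (j ∈ B ∧ j ∉ A) := by
  have hj := j.isLt
  rw [mkT, Finset.mem_filter, if_neg (by omega), if_neg (by omega)]
  constructor
  · rintro ⟨-, j', ⟨he, h⟩ | ⟨he, h⟩⟩
    · omega
    · have : j' = j := by apply Fin.ext; omega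
      rwa [← this]
  · intro h
    exact ⟨(pair_mem_Omega j).2, j, Or.inr ⟨rfl, h⟩⟩

lemma ATset_mkT (hBA : B ⊆ Aᶜ) : ATset g (mkT g A B) = A := by
  ext j
  rw [mem_ATset_iff, mem_mkT_odd, mem_mkT_even]
  by_cases hA : j ∈ A
  · have hB : j ∉ B := fun h => (Finset.mem_compl.1 (hBA h)) hA
    simp [hA, hB]
  · by_cases hB : j ∈ B <;> simp [hA, hB]

lemma Bset_mkT (hBA : B ⊆ Aᶜ) : Bset g A (mkT g A B) = B := by
  ext j
  rw [mem_Bset, mem_mkT_odd]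
  constructor
  · rintro ⟨hA, h | h⟩
    · exact absurd h hA
    · exact h
  · intro h
    exact ⟨Finset.mem_compl.1 (hBA h), Or.inr h⟩

lemma card_mkT (hBA : B ⊆ Aᶜ) :
    (mkT g A B).card = A.card + 2 * B.card + 1 + (if (g - A.card) % 2 = 1 then 1 else 0) := by
  have h := card_eq_decomp (mkT_subset (A := A) (B := B)) (ATset_mkT hBA)
  rw [Bset_mkT hBA] at h
  rw [h, if_pos (mem_mkT_high1)]
  have : (if 2 * g + 2 ∈ mkT g A B then 1 else 0) = (if (g - A.card) % 2 = 1 then 1 else 0) := by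
    by_cases hh : (g - A.card) % 2 = 1
    · rw [if_pos (mem_mkT_high2.2 hh), if_pos hh]
    · rw [if_neg (fun hc => hh (mem_mkT_high2.1 hc)), if_neg hh]
  omega

end MkT

section Count

variable {g : ℕ}

lemma count_parity (S : Finset (Fin g)) : ∀ ε, ε < 2 → S.Nonempty →
    (S.powerset.filter fun B => B.card % 2 = ε).card = 2 ^ (S.card - 1) := by
  classical
  induction S using Finset.induction_on with
  | empty => intro ε hε h; exact absurd rfl h.ne_empty
  | @insert a S ha ih =>
    intro ε hε _
    have hsplit : ((insert a S).powerset.filter fun B => B.card % 2 = ε) =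
        (S.powerset.filter fun B => B.card % 2 = ε) ∪
          ((S.powerset.filter fun B => B.card % 2 = 1 - ε).image (insert a)) := by
      rw [Finset.powerset_insert, Finset.filter_union, Finset.filter_image]
      congr 1
      apply congrArg _
      apply Finset.filter_congr
      intro B hB
      rw [Finset.mem_powerset] at hB
      have haB : a ∉ B := fun h => ha (hB h)
      rw [Finset.card_insert_of_notMem haB]
      constructor <;> intro h <;> omega
    have hdisj : Disjoint (S.powerset.filter fun B => B.card % 2 = ε)
        ((S.powerset.filter fun B => B.card % 2 = 1 - ε).image (insert a)) := by
      rw [Finset.disjoint_left]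
      rintro B hB1 hB2
      rw [Finset.mem_filter, Finset.mem_powerset] at hB1
      obtain ⟨C, hC, rfl⟩ := Finset.mem_image.1 hB2
      exact ha (hB1.1 (Finset.mem_insert_self a C))
    have hinj : Set.InjOn (insert a) (((S.powerset.filter fun B => B.card % 2 = 1 - ε) : Finset (Finset (Fin g))) : Set (Finset (Fin g))) := by
      intro B hB C hC h
      rw [Finset.coe_filter, Set.mem_setOf_eq, Finset.mem_powerset] at hB hC
      have haB : a ∉ B := fun hh => ha (hB.1 hh)
      have haC : a ∉ C := fun hh => ha (hC.1 hh)
      rw [← Finset.erase_insert haB, ← Finset.erase_insert haC, h]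
    rw [hsplit, Finset.card_union_of_disjoint hdisj, Finset.card_image_of_injOn hinj]
    rcases S.eq_empty_or_nonempty with hS | hS
    · subst hS
      simp only [Finset.powerset_empty, Finset.card_insert_of_notMem ha, Finset.card_empty]
      interval_cases ε <;> simp [Finset.filter_singleton]
    · have h1 := ih ε hε hS
      have h2 := ih (1 - ε) (by omega) hS
      have hc : 1 ≤ S.card := Finset.card_pos.2 hS
      rw [h1, h2, Finset.card_insert_of_notMem ha]
      have e : S.card + 1 - 1 = (S.card - 1) + 1 := by omega
      rw [e, pow_succ]
      omega

end Count

section Final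

open scoped Classical

variable {g : ℕ}

lemma numOrbits_eq (g : ℕ) (A : Finset (Fin g)) :
    numOrbits g (fun T => IsEvenRep g T ∧ ATset g T.1 = A)
      = (Aᶜ.powerset.filter fun B => B.card % 2 = ((g - A.card) / 2) % 2).card := by
  set P : Adm g → Prop := fun T => IsEvenRep g T ∧ ATset g T.1 = A with hP
  set Y : Finset (Finset (Fin g)) :=
    Aᶜ.powerset.filter fun B => B.card % 2 = ((g - A.card) / 2) % 2 with hY
  have hmem : ∀ S : {T : Adm g // P T}, Phi g A S.1.1 ∈ Y :=
    fun S => Phi_mem_target S.1.2.1 S.2.2 S.2.1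
  have hsound : ∀ S S' : {T : Adm g // P T}, orbRel g P S S' →
      (⟨Phi g A S.1.1, hmem S⟩ : {B // B ∈ Y}) = ⟨Phi g A S'.1.1, hmem S'⟩ := by
    rintro S S' ⟨v, h | h⟩ <;> refine Subtype.ext ?_ <;> symm <;>
      show Phi g A S'.1.1 = Phi g A S.1.1
    · rw [h, Phi_act S.2.2]
    · rw [h, Phi_compl (act_subset_Omega S.1.2.1), Phi_act S.2.2]
  let F : Quot (orbRel g P) → {B // B ∈ Y} :=
    Quot.lift (fun S => (⟨Phi g A S.1.1, hmem S⟩ : {B // B ∈ Y})) hsound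
  have hFmk : ∀ S, F (Quot.mk _ S) = ⟨Phi g A S.1.1, hmem S⟩ := fun _ => rfl
  have hparity : ∀ S : {T : Adm g // P T}, S.1.1.card % 2 = (g + 1) % 2 := fun S => S.1.2.2
  have hco : ∀ S : {T : Adm g // P T}, ∀ (h : ¬ (2 * g + 1 ∈ S.1.1)),
      (Omega g \ S.1.1) ⊆ Omega g ∧ ATset g (Omega g \ S.1.1) = A ∧
        (Omega g \ S.1.1).card % 2 = (g + 1) % 2 ∧
        Bset g A (Omega g \ S.1.1) = Aᶜ \ Bset g A S.1.1 ∧ 2 * g + 1 ∈ Omega g \ S.1.1 := by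
    intro S h
    have hle : S.1.1.card ≤ 2 * g + 2 := by
      have := Finset.card_le_card S.1.2.1
      rwa [card_Omega] at this
    refine ⟨compl_subset_Omega, by rw [ATset_compl, S.2.2], ?_, Bset_compl, ?_⟩
    · rw [card_compl S.1.2.1]
      have := hparity S
      omega
    · exact (mem_compl_iff high_mem_Omega.1).2 h
  have hinj : Function.Injective F := by
    intro x y h
    obtain ⟨S, rfl⟩ := Quot.exists_rep x
    obtain ⟨S', rfl⟩ := Quot.exists_rep y
    rw [hFmk, hFmk] at h
    have hPhi : Phi g A S.1.1 = Phi g A S'.1.1 := congrArg Subtype.val h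
    have hT := S.1.2.1
    have hT' := S'.1.2.1
    have hAT := S.2.2
    have hAT' := S'.2.2
    have hp : S.1.1.card % 2 = S'.1.1.card % 2 := by rw [hparity S, hparity S']
    by_cases h1 : 2 * g + 1 ∈ S.1.1 <;> by_cases h1' : 2 * g + 1 ∈ S'.1.1
    · rw [Phi, if_pos h1, Phi, if_pos h1'] at hPhi
      obtain ⟨v, hv⟩ := exists_act S.1.1 S'.1.1 hT hT' hAT hAT' hp hPhi
        (iff_of_true h1 h1')
      exact Quot.sound ⟨v, Or.inl hv⟩
    · rw [Phi, if_pos h1, Phi, if_neg h1'] at hPhi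
      obtain ⟨hc1, hc2, hc3, hc4, hc5⟩ := hco S' h1'
      have hB : Bset g A S.1.1 = Bset g A (Omega g \ S'.1.1) := by
        rw [hc4, ← hPhi]
      obtain ⟨v, hv⟩ := exists_act S.1.1 (Omega g \ S'.1.1) hT hc1 hAT hc2
        (by rw [hparity S, hc3]) hB (iff_of_true h1 hc5)
      have : S'.1.1 = Omega g \ act g v S.1.1 := by
        rw [← hv, compl_compl_Omega hT']
      exact Quot.sound ⟨v, Or.inr this⟩
    · rw [Phi, if_neg h1, Phi, if_pos h1'] at hPhi
      obtain ⟨hc1, hc2, hc3, hc4, hc5⟩ := hco S h1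
      have hB : Bset g A S'.1.1 = Bset g A (Omega g \ S.1.1) := by
        rw [hc4, hPhi]
      obtain ⟨v, hv⟩ := exists_act S'.1.1 (Omega g \ S.1.1) hT' hc1 hAT' hc2
        (by rw [hparity S', hc3]) hB (iff_of_true h1' hc5)
      have : S.1.1 = Omega g \ act g v S'.1.1 := by
        rw [← hv, compl_compl_Omega hT]
      exact (Quot.sound ⟨v, Or.inr this⟩).symm
    · rw [Phi, if_neg h1, Phi, if_neg h1'] at hPhi
      have hB : Bset g A S.1.1 = Bset g A S'.1.1 := by
        rw [← Finset.sdiff_sdiff_eq_self (Bset_subset (T := S.1.1)),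
          ← Finset.sdiff_sdiff_eq_self (Bset_subset (T := S'.1.1)), hPhi]
      obtain ⟨v, hv⟩ := exists_act S.1.1 S'.1.1 hT hT' hAT hAT' hp hB
        (iff_of_false h1 h1')
      exact Quot.sound ⟨v, Or.inl hv⟩
  have hsurj : Function.Surjective F := by
    rintro ⟨B, hB⟩
    rw [hY, Finset.mem_filter, Finset.mem_powerset] at hB
    obtain ⟨hBA, hBc⟩ := hB
    have ha := card_A_le (A := A)
    have hcard := card_mkT (g := g) hBA
    have hcard4 : (mkT g A B).card % 4 = (g + 1) % 4 := by
      by_cases hm : (g - A.card) % 2 = 1 <;>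
        simp only [hm, if_true, if_false] at hcard <;> omega
    have hadm : (mkT g A B) ⊆ Omega g ∧ (mkT g A B).card % 2 = (g + 1) % 2 :=
      ⟨mkT_subset, by omega⟩
    have hSP : P (⟨mkT g A B, hadm⟩ : Adm g) := ⟨hcard4, ATset_mkT hBA⟩
    refine ⟨Quot.mk _ ⟨⟨mkT g A B, hadm⟩, hSP⟩, ?_⟩
    rw [hFmk]
    refine Subtype.ext ?_
    show Phi g A (mkT g A B) = B
    rw [Phi, if_pos mem_mkT_high1, Bset_mkT hBA]
  rw [numOrbits, Nat.card_congr (Equiv.ofBijective F ⟨hinj, hsurj⟩),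
    Nat.card_eq_finsetCard]

end Final

/-- For every `A ⊆ {1,…,g}`, the number of `G`-orbits of even classes `[T] ∈ Θ` with
`A(T) = A` equals `2^{g−1−|A|}` if `|A| < g`, and equals `1` if `A = {1,…,g}`. -/
theorem stmt17 (g : ℕ) (hg : 1 ≤ g) (A : Finset (Fin g)) :
    (A.card < g →
      numOrbits g (fun T => IsEvenRep g T ∧ ATset g T.1 = A) = 2 ^ (g - 1 - A.card)) ∧
    (A = Finset.univ →
      numOrbits g (fun T => IsEvenRep g T ∧ ATset g T.1 = A) = 1) := by
  constructor
  · intro hlt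
    rw [numOrbits_eq]
    have hne : (Aᶜ : Finset (Fin g)).Nonempty := by
      rw [← Finset.card_pos, card_compl_A]; omega
    rw [count_parity Aᶜ (((g - A.card) / 2) % 2) (by omega) hne, card_compl_A]
    congr 1
    omega
  · intro hA
    subst hA
    rw [numOrbits_eq]
    rw [Finset.compl_univ, Finset.powerset_empty]
    have hc : (Finset.univ : Finset (Fin g)).card = g := by
      rw [Finset.card_univ, Fintype.card_fin]
    rw [Finset.filter_singleton, if_pos (by rw [hc]; simp)]
    exact Finset.card_singleton _
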